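/- arXiv:1504.06942 — 3 statements merged into one kernel-verified Lean document; each statement's English description precedes it below -/
import Mathlib

section
/- For any f : {1,...,9} → {0,1} satisfying f(i)f(j) = 0 for every edge {i,j} of the KK exclusivity graph, Σᵢ f(i) ≤ 3. -/
/-- Edges of the Kurzyński–Kaszlikowski exclusivity graph on vertices {1,…,9}. -/
def KKedges : List (ℕ × ℕ) :=
  [(1,2),(1,3),(1,4),(2,3),(2,5),(3,6),(4,7),(4,8),(5,7),(5,9),(6,8),(6,9),(7,8)]

/-!
The triangles {1,2,3} and {4,7,8} each carry at most one 1. If vertex 9 carries a 1, its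
neighbours 5 and 6 do not, so the total is at most 1 + 1 + 1. Otherwise, a 1 on both 5 and 6
rules out 2, 3, 7 and 8, leaving only the edge {1,4}; and a 1 on at most one of 5, 6 again
gives 1 + 1 + 1.
-/

lemma add_le_one_of_mul_eq_zero {a b : ℕ} (ha : a = 0 ∨ a = 1) (hb : b = 0 ∨ b = 1)
    (h : a * b = 0) : a + b ≤ 1 := by
  rcases Nat.mul_eq_zero.mp h with rfl | rfl <;> omega

/-- KK noncontextual bound: any 0/1 assignment to the nine events with
`f i * f j = 0` on every edge of the KK exclusivity graph sums to at most 3. -/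
theorem kk_classical_bound (f : Fin 9 → ℕ)
    (h01 : ∀ i, f i = 0 ∨ f i = 1)
    (hexcl : ∀ i j : Fin 9, (i.val + 1, j.val + 1) ∈ KKedges → f i * f j = 0) :
    ∑ i, f i ≤ 3 := by
  -- `f i` is the value at vertex `i + 1`.
  have edge (i j : Fin 9) (hij : (i.val + 1, j.val + 1) ∈ KKedges) : f i + f j ≤ 1 :=
    add_le_one_of_mul_eq_zero (h01 i) (h01 j) (hexcl i j hij)
  have triangle₁₂₃ : f 0 + f 1 + f 2 ≤ 1 := by
    have := edge 0 1 (by decide); have := edge 0 2 (by decide); have := edge 1 2 (by decide)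
    omega
  have triangle₄₇₈ : f 3 + f 6 + f 7 ≤ 1 := by
    have := edge 3 6 (by decide); have := edge 3 7 (by decide); have := edge 6 7 (by decide)
    omega
  rw [Fin.sum_univ_succ, Fin.sum_univ_eight]
  simp only [Fin.succ_zero_eq_one, Fin.reduceSucc]
  rcases h01 8 with h₉ | h₉
  · by_cases h₅₆ : f 4 = 1 ∧ f 5 = 1
    · have := edge 1 4 (by decide); have := edge 2 5 (by decide)
      have := edge 4 6 (by decide); have := edge 5 7 (by decide)
      have := edge 0 3 (by decide)
      omega
    · have := h01 4; have := h01 5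
      omega
  · have := edge 4 8 (by decide); have := edge 5 8 (by decide)
    omega
end

section
/- With β = π/5 and τ = 1/√(1+cos β), let v_k = τ·(√(cos β), cos(2kβ), sin(2kβ)) for k = 0,...,4. Then each v_k is a unit vector in ℝ³ and v_k · v_{k+2 mod 5} = 0 for all k, i.e., the five vectors realize the 5-cycle orthogonality (exclusivity) structure of KCBS. -/
open Real

/-- The KCBS measurement vectors: with β = π/5 and τ = 1/√(1+cos β),
`kcbsVec k = τ • (√(cos β), cos(2kβ), sin(2kβ))`. -/
noncomputable def kcbsVec (k : Fin 5) : Fin 3 → ℝ :=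
  fun t =>
    (1 / Real.sqrt (1 + Real.cos (π / 5))) *
      ![Real.sqrt (Real.cos (π / 5)),
        Real.cos (2 * (k : ℝ) * (π / 5)),
        Real.sin (2 * (k : ℝ) * (π / 5))] t

lemma hcos_pos : (0:ℝ) < Real.cos (π / 5) := by
  apply Real.cos_pos_of_mem_Ioo
  constructor <;> nlinarith [Real.pi_pos]

lemma h1pos : (0:ℝ) < 1 + Real.cos (π / 5) := by nlinarith [hcos_pos]

lemma dot_aux (c A B A' B' : ℝ) (hc : 0 ≤ c) (h1 : (0:ℝ) < 1 + c) :
    (1 / Real.sqrt (1+c) * Real.sqrt c) * (1 / Real.sqrt (1+c) * Real.sqrt c) +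
    (1 / Real.sqrt (1+c) * A) * (1 / Real.sqrt (1+c) * B) +
    (1 / Real.sqrt (1+c) * A') * (1 / Real.sqrt (1+c) * B') =
      (c + (A * B + A' * B')) / (1 + c) := by
  have hs : Real.sqrt c * Real.sqrt c = c := Real.mul_self_sqrt hc
  have hsq : Real.sqrt (1+c) * Real.sqrt (1+c) = 1 + c := Real.mul_self_sqrt h1.le
  have hsp : Real.sqrt (1+c) ≠ 0 := (Real.sqrt_pos.mpr h1).ne'
  field_simp
  rw [Real.sq_sqrt hc, Real.sq_sqrt h1.le]; ring

lemma dot_formula (j k : Fin 5) :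
    ∑ t, kcbsVec j t * kcbsVec k t =
      (Real.cos (π/5) + Real.cos (2*(j:ℝ)*(π/5) - 2*(k:ℝ)*(π/5))) / (1 + Real.cos (π/5)) := by
  simp only [kcbsVec, Fin.sum_univ_three, Matrix.cons_val_zero, Matrix.cons_val_one,
    Matrix.head_cons, Matrix.cons_val_two, Matrix.tail_cons, Real.cos_sub]
  exact dot_aux _ _ _ _ _ hcos_pos.le h1pos

lemma cos_four : Real.cos (4 * (π/5)) = - Real.cos (π/5) := by
  rw [show 4 * (π/5) = π - π/5 by ring, Real.cos_pi_sub]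

lemma cos_six : Real.cos (6 * (π/5)) = - Real.cos (π/5) := by
  rw [show 6 * (π/5) = π + π/5 by ring, Real.cos_add, Real.cos_pi, Real.sin_pi]
  ring

/-- Each KCBS vector is a unit vector, and vectors whose indices differ by 2 (mod 5)
are orthogonal; hence the five vectors realize the 5-cycle (KCBS) exclusivity graph. -/
theorem kcbs_vectors_realize_pentagon :
    (∀ k : Fin 5, ∑ t, kcbsVec k t * kcbsVec k t = 1) ∧
    (∀ k : Fin 5, ∑ t, kcbsVec k t * kcbsVec (k + 2) t = 0) := by
  constructor
  · intro k
    rw [dot_formula, sub_self, Real.cos_zero, add_comm]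
    exact div_self h1pos.ne'
  · intro k
    rw [dot_formula, div_eq_zero_iff]
    left
    fin_cases k <;> norm_num [Fin.add_def, -Real.cos_pi_div_five] <;>
      first
        | (rw [cos_four]; ring)
        | (rw [cos_six]; ring)
        | (rw [show 2*(π/5)-6*(π/5) = -(4*(π/5)) by ring, Real.cos_neg, cos_four]; ring)
        | (rw [show 4*(π/5)-8*(π/5) = -(4*(π/5)) by ring, Real.cos_neg, cos_four]; ring)
        | (rw [show 8*(π/5)-2*(π/5) = 6*(π/5) by ring, cos_six]; ring)
end

section
/- With β = π/5, τ = 1/√(1+cos β), and v_k = τ·(√(cos β), cos(2kβ), sin(2kβ)) for k = 0,...,4, the projectors P_k = v_k v_kᵀ satisfy ⟨e₁, (Σ_k P_k) e₁⟩ = √5, i.e., the KCBS operator evaluated on the state (1,0,0) equals √5. -/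
open Real

/-- The sum of the projectors P_k = v_k v_kᵀ. -/
noncomputable def kcbsOp : Matrix (Fin 3) (Fin 3) ℝ :=
  ∑ k : Fin 5, Matrix.of (fun i j => kcbsVec k i * kcbsVec k j)

/-! ⟨e₁, (Σ_k v_k v_kᵀ) e₁⟩ = Σ_k ⟨v_k, e₁⟩², and every v_k has the same first coordinate
τ √(cos β), so the value is 5 cos β / (1 + cos β). With cos(π/5) = (1 + √5)/4 this ratio is
(1 + √5)/(5 + √5) = 1/√5. -/

namespace Matrix

theorem dotProduct_sum_vecMulVec_self_mulVec {ι n R : Type*} [Fintype ι] [Fintype n]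
    [CommSemiring R] (v : ι → n → R) (x : n → R) :
    x ⬝ᵥ ((∑ k, vecMulVec (v k) (v k)) *ᵥ x) = ∑ k, (v k ⬝ᵥ x) ^ 2 := by
  simp only [sum_mulVec, vecMulVec_mulVec, op_smul_eq_smul, dotProduct_sum, dotProduct_smul,
    smul_eq_mul, dotProduct_comm x (v _), sq]

end Matrix

theorem cos_pi_div_five_div_one_add_cos : cos (π / 5) / (1 + cos (π / 5)) = 1 / √5 := by
  have h5 : √5 ^ 2 = 5 := sq_sqrt (by norm_num)
  have hpos : 0 < √5 := by positivity
  rw [cos_pi_div_five, div_eq_div_iff (by positivity) hpos.ne']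
  nlinarith

theorem kcbsVec_dotProduct_e1 (k : Fin 5) :
    kcbsVec k ⬝ᵥ ![1, 0, 0] = √(cos (π / 5)) / √(1 + cos (π / 5)) := by
  simp [kcbsVec, dotProduct, Fin.sum_univ_three, div_eq_inv_mul]

/-- The KCBS operator evaluated on the state e₁ = (1,0,0) equals √5. -/
theorem kcbs_operator_on_e1_eq_sqrt_five :
    dotProduct ![1, 0, 0] (kcbsOp.mulVec ![1, 0, 0]) = Real.sqrt 5 := by
  have hcos : 0 ≤ cos (π / 5) := by rw [cos_pi_div_five]; positivity
  have hop : kcbsOp = ∑ k, Matrix.vecMulVec (kcbsVec k) (kcbsVec k) := rfl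
  rw [hop, Matrix.dotProduct_sum_vecMulVec_self_mulVec]
  simp only [kcbsVec_dotProduct_e1, div_pow, sq_sqrt hcos,
    sq_sqrt (by linarith : 0 ≤ 1 + cos (π / 5)), cos_pi_div_five_div_one_add_cos,
    Finset.sum_const, Finset.card_univ, Fintype.card_fin, nsmul_eq_mul]
  field_simp
  norm_num
end
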